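/- arXiv:math/0601386 — 2 statements merged into one kernel-verified Lean document; each statement's English description precedes it below -/
import Mathlib

section
/- The atoms in I^1 satisfy ⟨u_1⟩_0^α = ∂^αu_1, ⟨u_1⟩_1^α = u_1, ⟨u_1⟩_q^α = 0 for q > 1, ⟨∂^βu_1⟩_0^α = ∂^βu_1, and ⟨∂^βu_1⟩_q^α = 0 for q > 0; and for a standard basis element σ_1⊗⋯⊗σ_n of I^n the atom satisfies the tensor formula ⟨σ_1⊗⋯⊗σ_n⟩_q^α = Σ_{i(1)+⋯+i(n)=q} ⟨σ_1⟩_{i(1)}^α ⊗ ⟨σ_2⟩_{i(2)}^{(−1)^{i(1)}α} ⊗ ⋯ ⊗ ⟨σ_n⟩_{i(n)}^{(−1)^{i(1)+⋯+i(n−1)}α}. -/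
namespace CubicalNerve

/-- Signs: `true` is `+`, `false` is `−`, as an integer `±1`. -/
def sgn (α : Bool) : ℤ := if α then 1 else -1

/-- Sign twisting: `twist α m` is the sign `(−1)^m α`. -/
def twist (α : Bool) (m : ℕ) : Bool := if Even m then α else !α

/-- A standard basis element of the chain complex `Iⁿ`: the factor at position `i` is
`u₁` when the value is `none`, and `∂^α u₁` when the value is `some α`. -/
abbrev Cell (n : ℕ) := Fin n → Option Bool

/-- The dimension of a standard basis element: the number of `u₁` factors. -/
def Cell.dim {n : ℕ} (σ : Cell n) : ℕ := (Finset.univ.filter fun i => σ i = none).card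

/-- The number of `u₁` factors strictly before position `i`. -/
def Cell.below {n : ℕ} (σ : Cell n) (i : Fin n) : ℕ :=
  (Finset.univ.filter fun j => j < i ∧ σ j = none).card

/-- The number of `∂^± u₁` factors at positions `≤ j`. -/
def Cell.sLe {n : ℕ} (σ : Cell n) (j : Fin n) : ℕ :=
  (Finset.univ.filter fun i => i ≤ j ∧ σ i ≠ none).card

/-- The chain groups of `Iⁿ` (all degrees taken together): the free abelian group
on the standard basis elements. -/
abbrev Chain (n : ℕ) := Cell n →₀ ℤ

/-- The boundary of a standard basis element (tensor-product boundary formula). -/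
noncomputable def bdCell {n : ℕ} (σ : Cell n) : Chain n :=
  ∑ i ∈ Finset.univ.filter (fun i => σ i = none),
    ((-1 : ℤ) ^ σ.below i) •
      (Finsupp.single (Function.update σ i (some true)) 1 -
        Finsupp.single (Function.update σ i (some false)) 1)

/-- The boundary operator of `Iⁿ`. -/
noncomputable def bd {n : ℕ} (c : Chain n) : Chain n := c.sum fun σ z => z • bdCell σ

/-- The positive part of a chain. -/
noncomputable def posPart {n : ℕ} (c : Chain n) : Chain n :=
  Finsupp.mapRange (fun z => max z 0) (by simp) c

/-- The negative part of a chain. -/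
noncomputable def negPart {n : ℕ} (c : Chain n) : Chain n :=
  Finsupp.mapRange (fun z => max (-z) 0) (by simp) c

/-- `∂^α`: the positive (resp. negative) part of the boundary. -/
noncomputable def bdp {n : ℕ} (α : Bool) (c : Chain n) : Chain n :=
  if α then posPart (bd c) else negPart (bd c)

/-- The atom `⟨σ⟩`: `atom σ α q` is the chain `⟨σ⟩_q^α = (∂^α)^{p−q} σ` for `q ≤ p = dim σ`,
and `0` for `q > p`. -/
noncomputable def atom {n : ℕ} (σ : Cell n) (α : Bool) (q : ℕ) : Chain n :=
  if q ≤ σ.dim then (bdp α)^[σ.dim - q] (Finsupp.single σ 1) else 0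

/-- The augmentation (extended by zero on positive-degree chains). -/
noncomputable def aug {n : ℕ} (c : Chain n) : ℤ := c.sum fun σ z => if σ.dim = 0 then z else 0

/-- The top basis element `u_n = u₁ ⊗ ⋯ ⊗ u₁` of `Iⁿ`. -/
def un (n : ℕ) : Cell n := fun _ => none

/-- The basis element `u_{k-1} ⊗ ∂^γ u₁ ⊗ u_{n-k}` (here `k : Fin n` is `k−1` in the
1-indexed notation of the paper). -/
def kcell {n : ℕ} (k : Fin n) (γ : Bool) : Cell n := Function.update (un n) k (some γ)

/-- Membership in `ν Iⁿ` for a double sequence `x`, where `x i α` is `x_i^α`: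
each `x_i^α` is an `i`-chain which is a nonnegative sum of standard basis elements,
`ε x_0^- = ε x_0^+ = 1`, and `x_i^+ − x_i^− = ∂ x_{i+1}^- = ∂ x_{i+1}^+`. -/
def IsNu {n : ℕ} (x : ℕ → Bool → Chain n) : Prop :=
  (∀ i α, ∀ σ ∈ (x i α).support, Cell.dim σ = i) ∧
  (∀ i α, 0 ≤ x i α) ∧
  (∀ α, aug (x 0 α) = 1) ∧
  (∀ i α, x i true - x i false = bd (x (i + 1) α))

/-- The double sequence of an atom. -/
noncomputable def atomSeq {n : ℕ} (σ : Cell n) : ℕ → Bool → Chain n := fun i α => atom σ α i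

/-- The identity operation `d_p^α` on double sequences. -/
noncomputable def dOp {n : ℕ} (p : ℕ) (α : Bool) (x : ℕ → Bool → Chain n) : ℕ → Bool → Chain n :=
  fun i β => if i < p then x i β else if i = p then x p α else 0

/-- The composition `x #_p y = x − d_p⁺ x + y`, formed termwise. -/
noncomputable def comp {n : ℕ} (p : ℕ) (x y : ℕ → Bool → Chain n) : ℕ → Bool → Chain n :=
  fun i β => x i β - dOp p true x i β + y i β

/-- Insertion of a new tensor factor at (0-indexed) position `i` (clamped into range). -/
def insertCell {m : ℕ} (i : ℕ) (v : Option Bool) (σ : Cell m) : Cell (m + 1) :=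
  Fin.insertNth ⟨min i m, Nat.lt_succ_of_le (min_le_right i m)⟩ v σ

/-- The face chain map `∂̌_i^α : Iᵐ → Iᵐ⁺¹` (with `i` 1-indexed, `1 ≤ i ≤ m+1`),
given on standard basis elements by `x ⊗ y ↦ x ⊗ ∂^α u₁ ⊗ y`. -/
noncomputable def faceL (m : ℕ) (i : ℕ) (α : Bool) : Chain m →ₗ[ℤ] Chain (m + 1) :=
  Finsupp.lmapDomain ℤ ℤ (insertCell (i - 1) (some α))

/-- `IsFaceComposite F` means that `F` is a composite of face chain maps `∂̌_i^α`. -/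
inductive IsFaceComposite : ∀ {m n : ℕ}, (Chain m →ₗ[ℤ] Chain n) → Prop
  | id (m : ℕ) : IsFaceComposite (LinearMap.id : Chain m →ₗ[ℤ] Chain m)
  | step {m d : ℕ} {F : Chain m →ₗ[ℤ] Chain d} (i : ℕ) (α : Bool)
      (h1 : 1 ≤ i) (h2 : i ≤ d + 1) :
      IsFaceComposite F → IsFaceComposite ((faceL d i α).comp F)

/-- `stdC m p ι a` is the composite `∂̌_{ι 0}^{a 0} ∘ ⋯ ∘ ∂̌_{ι (p-1)}^{a (p-1)} : Iᵐ → Iᵐ⁺ᵖ`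
(so `∂̌_{ι (p-1)}^{a (p-1)}` is applied first). -/
noncomputable def stdC (m : ℕ) :
    (p : ℕ) → (Fin p → ℕ) → (Fin p → Bool) → (Chain m →ₗ[ℤ] Chain (m + p))
  | 0, _, _ => LinearMap.id
  | p + 1, ι, a =>
      (faceL (m + p) (ι 0) (a 0)).comp (stdC m p (fun r => ι r.succ) (fun r => a r.succ))

/-- Transport of chains along an equality of dimensions. -/
noncomputable def chainCongr {a b : ℕ} (h : a = b) : Chain a ≃ₗ[ℤ] Chain b :=
  Finsupp.domLCongr (Equiv.arrowCongr (finCongr h) (Equiv.refl (Option Bool)))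

/-- The basis element of `I¹` with value `v`. -/
def cellOf (v : Option Bool) : Cell 1 := fun _ => v

/-- The `n`-fold tensor product of chains of `I¹`, as a chain of `Iⁿ`. -/
noncomputable def tens {n : ℕ} (c : Fin n → Chain 1) : Chain n :=
  Finsupp.equivFunOnFinite.symm fun σ => ∏ j, (c j) (cellOf (σ j))

/-- `τ` has an "extreme" standard decomposition of constant sign `ε`: for its `r`-th
factor `∂_{i}^{α}` (`r`, `i` 1-indexed), `(−1)^{i−r} α = ε`. -/
def ExtremeSign {n : ℕ} (τ : Cell n) (ε : ℤ) : Prop :=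
  ∀ (j : Fin n) (α : Bool), τ j = some α →
    (-1 : ℤ) ^ ((j : ℕ) + 1 + τ.sLe j) * sgn α = ε

/-- The basis element `τ` corresponds to a precubical operation complementary to
`∂_{k+1}^γ` (with `k : Fin n`, i.e. `k+1` in the paper's 1-indexing): its standard
decomposition has no factor at position `k`, and inserting `∂_{k+1}^{−γ}` produces
a standard decomposition of constant sign. -/
def CellCompl {n : ℕ} (k : Fin n) (γ : Bool) (τ : Cell n) : Prop :=
  τ k = none ∧ ∃ ε : ℤ, ExtremeSign (Function.update τ k (some (!γ))) ε

/-- The chain homotopy `D` associated to the face `∂_{k+1}^γ` (0-indexed `k : Fin n`). -/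
noncomputable def Dfun {n : ℕ} (k : Fin n) (γ : Bool) (c : Chain n) : Chain n :=
  c.sum fun τ z =>
    if τ k = some (!γ) then
      (z * (-((-1 : ℤ) ^ Cell.below τ k * sgn γ))) •
        Finsupp.single (Function.update τ k (none : Option Bool)) 1
    else 0

/-- The double sequence `A_q^β` of Proposition 6.4. -/
noncomputable def Aseq {n : ℕ} (k : Fin n) (γ : Bool) (q : ℕ) (β : Bool) :
    ℕ → Bool → Chain n :=
  fun i α =>
    if i + 1 < q then atom (un n) α i
    else if i + 1 = q then
      (if α = β then atom (un n) β i
       else atom (un n) β i - bd (Dfun k γ (atom (un n) β i)))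
    else if i = q then sgn β • Dfun k γ (atom (un n) β (q - 1))
    else 0

/-- The elements `A_q` of Proposition 6.5, defined inductively from the `A_q^β` by
`A_0 = ⟨σ⟩` and `A_q = A_q^− #_{q−1} A_{q−1} #_{q−1} A_q^+`. -/
noncomputable def Aq {n : ℕ} (k : Fin n) (γ : Bool) : ℕ → (ℕ → Bool → Chain n)
  | 0 => atomSeq (kcell k γ)
  | q + 1 => comp q (comp q (Aseq k γ (q + 1) false) (Aq k γ q)) (Aseq k γ (q + 1) true)

/-!
The atom `⟨σ⟩_q^α` is the sum `atomChain σ α q` of the `q`-dimensional faces `ρ` of `σ` in which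
each factor `∂^β u₁` standing where `σ` has `u₁` satisfies `β = (−1)^b α`, `b` being the number of
factors `u₁` of `ρ` before it. In the top degree this is `σ` itself. In the boundary of such a sum
of degree `q + 1`, a `q`-cell `ρ` receives one contribution for each new factor of `ρ`; thanks to
the signs `(−1)^b` these telescope to `+1` if `ρ` is in the `+` sum of degree `q`, to `−1` if it is
in the `−` sum, and to `0` otherwise. Below the top degree the two sums have disjoint supports,
so `∂^α` picks out the `α` one, and downward induction identifies the atom with `atomChain`.
On the other side, in the tensor formula the degree of every factor is forced by `ρ`, so only one
multi-index contributes to the coefficient of `ρ`, and it contributes exactly the same condition.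
-/

open Finset

-- Only the point of `s` where `p` switches from true to false contributes.
theorem sum_ite_switch {ι : Type*} [LinearOrder ι] (s : Finset ι) (p : ι → Prop)
    [DecidablePred p] :
    ∑ i ∈ s, (if (∀ j ∈ s, j < i → p j) ∧ (∀ j ∈ s, i < j → ¬p j) then
        (if p i then (1 : ℤ) else -1) else 0)
      = (if ∀ j ∈ s, p j then 1 else 0) - (if ∀ j ∈ s, ¬p j then 1 else 0) := by
  induction s using Finset.induction_on_max with
  | empty => simp
  | insert a s hmax ih =>
    have ha : a ∉ s := fun h => lt_irrefl a (hmax a h)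
    have hterm : ∀ i ∈ s, (if (∀ j ∈ insert a s, j < i → p j) ∧
          (∀ j ∈ insert a s, i < j → ¬p j) then (if p i then (1 : ℤ) else -1) else 0)
        = if ¬p a then (if (∀ j ∈ s, j < i → p j) ∧ (∀ j ∈ s, i < j → ¬p j) then
            (if p i then 1 else -1) else 0) else 0 := by
      intro i hi
      have hia := hmax i hi
      by_cases hpa : p a <;> simp [hpa, hia, hia.not_gt]
    have hlast : ((∀ j ∈ insert a s, j < a → p j) ∧ ∀ j ∈ insert a s, a < j → ¬p j) ↔
        ∀ j ∈ s, p j := by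
      simp +contextual [hmax, (hmax _ _).not_gt]
    rw [sum_insert ha, sum_congr rfl hterm, if_congr hlast rfl rfl]
    by_cases hpa : p a
    · simp [hpa]
    · simp [hpa, ih]
      split_ifs <;> ring

theorem twist_succ (α : Bool) (m : ℕ) : twist α (m + 1) = !twist α m := by
  simp only [twist, Nat.even_add_one]; split_ifs <;> simp

theorem twist_not (α : Bool) (m : ℕ) : twist (!α) m = !twist α m := by
  unfold twist; split_ifs <;> rfl

theorem sgn_mul_neg_one_pow (ε α : Bool) (b : ℕ) :
    sgn ε * (-1) ^ b = sgn α * if ε = twist α b then 1 else -1 := by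
  rcases Nat.even_or_odd b with h | h
  · rw [h.neg_one_pow]; cases ε <;> cases α <;> simp [twist, sgn, h]
  · rw [h.neg_one_pow]; cases ε <;> cases α <;> simp [twist, sgn, Nat.not_even_iff_odd.mpr h]

theorem eq_some_not_iff {x : Option Bool} (hx : x ≠ none) (b : Bool) :
    x = some (!b) ↔ x ≠ some b := by
  rcases x with _ | _ | _ <;> cases b <;> simp_all

section

variable {n : ℕ}

namespace Cell

theorem dim_update_none {ρ : Cell n} {i : Fin n} (h : ρ i ≠ none) :
    dim (Function.update ρ i none) = ρ.dim + 1 := by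
  have : univ.filter (fun j => Function.update ρ i none j = none) =
      insert i (univ.filter fun j => ρ j = none) := by
    ext j; by_cases hj : j = i <;> simp [Function.update_apply, hj]
  rw [dim, this, card_insert_of_notMem (by simpa using h), dim]

theorem below_update_of_le (ρ : Cell n) {i j : Fin n} (v : Option Bool) (h : j ≤ i) :
    below (Function.update ρ i v) j = ρ.below j := by
  unfold below
  congr 1
  refine filter_congr fun t _ => ?_
  rcases eq_or_ne t i with rfl | ht
  · simp [h.not_gt]
  · rw [Function.update_of_ne ht]

theorem below_update_none_of_lt {ρ : Cell n} {i j : Fin n} (h : ρ i ≠ none) (hij : i < j) :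
    below (Function.update ρ i none) j = ρ.below j + 1 := by
  have : univ.filter (fun t => t < j ∧ Function.update ρ i none t = none) =
      insert i (univ.filter fun t => t < j ∧ ρ t = none) := by
    ext t; by_cases ht : t = i <;> simp [Function.update_apply, ht, hij]
  rw [below, this, card_insert_of_notMem (by simp [h]), below]

theorem below_eq_sum (ρ : Cell n) (j : Fin n) :
    ρ.below j = ∑ t ∈ univ.filter (· < j), if ρ t = none then 1 else 0 := by
  rw [below, ← filter_filter, card_filter]

theorem dim_eq_sum (ρ : Cell n) : ρ.dim = ∑ j, if ρ j = none then 1 else 0 :=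
  card_filter _ _

def IsFace (ρ σ : Cell n) : Prop := ∀ j, σ j ≠ none → ρ j = σ j

instance (ρ σ : Cell n) : Decidable (ρ.IsFace σ) := by unfold IsFace; infer_instance

theorem IsFace.refl (σ : Cell n) : σ.IsFace σ := fun _ _ => rfl

theorem IsFace.dim_le {ρ σ : Cell n} (h : ρ.IsFace σ) : ρ.dim ≤ σ.dim := by
  refine card_le_card fun j => ?_
  simp only [mem_filter, mem_univ, true_and]
  exact fun hρ => by_contra fun hσ => hσ (h j hσ ▸ hρ)

theorem IsFace.dim_lt_of_ne {ρ σ : Cell n} (h : ρ.IsFace σ) (hne : ρ ≠ σ) :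
    ρ.dim < σ.dim := by
  obtain ⟨j, hj⟩ := Function.ne_iff.mp hne
  have hσ : σ j = none := by_contra fun hσ => hj (h j hσ)
  refine card_lt_card ⟨fun k => ?_, fun hsub => ?_⟩
  · simp only [mem_filter, mem_univ, true_and]
    exact fun hρ => by_contra fun hσ => hσ (h k hσ ▸ hρ)
  · have := hsub (by simpa using hσ)
    simp only [mem_filter, mem_univ, true_and] at this
    exact hj (this.trans hσ.symm)

theorem isFace_update_none_iff {ρ σ : Cell n} {i : Fin n} :
    IsFace (Function.update ρ i none) σ ↔ σ i = none ∧ ρ.IsFace σ := by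
  constructor
  · intro h
    have hi : σ i = none := by_contra fun hσ => hσ (by simpa using (h i hσ).symm)
    refine ⟨hi, fun j hσ => ?_⟩
    have hji : j ≠ i := by rintro rfl; exact hσ hi
    simpa [hji] using h j hσ
  · rintro ⟨hi, h⟩ j hσ
    have hji : j ≠ i := by rintro rfl; exact hσ hi
    simpa [hji] using h j hσ

end Cell

def bdCoeff (ρ : Cell n) (i : Fin n) : ℤ :=
  match ρ i with
  | some ε => sgn ε * (-1) ^ ρ.below i
  | none => 0

theorem update_some_eq_iff {σ ρ : Cell n} {i : Fin n} (hσ : σ i = none) (b : Bool) :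
    Function.update σ i (some b) = ρ ↔ ρ i = some b ∧ Function.update ρ i none = σ := by
  constructor
  · rintro rfl
    simp [Function.update_idem, hσ]
  · rintro ⟨hρ, rfl⟩
    simp [Function.update_idem, hρ]

theorem bdCell_apply (σ ρ : Cell n) :
    bdCell σ ρ = ∑ i, if Function.update ρ i none = σ then bdCoeff ρ i else 0 := by
  rw [bdCell, Finset.sum_apply', sum_filter]
  refine sum_congr rfl fun i _ => ?_
  by_cases hσ : σ i = none
  · simp only [hσ, if_true, Finsupp.smul_apply, Finsupp.sub_apply, Finsupp.single_apply,
      update_some_eq_iff hσ, smul_eq_mul]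
    rcases hρ : ρ i with _ | ε
    · simp [bdCoeff, hρ]
    · by_cases hu : Function.update ρ i none = σ
      · subst hu
        cases ε <;> simp [bdCoeff, hρ, sgn, Cell.below_update_of_le]
      · simp [hu]
  · rw [if_neg hσ, if_neg]
    rintro rfl
    simp at hσ

theorem bd_apply (c : Chain n) (ρ : Cell n) :
    bd c ρ = ∑ i, bdCoeff ρ i * c (Function.update ρ i none) := by
  rw [bd, Finsupp.sum_apply, Finsupp.sum_fintype _ _ (by simp)]
  simp only [Finsupp.smul_apply, smul_eq_mul, bdCell_apply, mul_sum]
  rw [sum_comm]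
  refine sum_congr rfl fun i _ => ?_
  simp [mul_comm]

theorem bdp_eq_of_bd_eq_sub {x c d : Chain n} (h : bd x = c - d) (hc : 0 ≤ c)
    (hd : 0 ≤ d) (hcd : ∀ ρ, c ρ = 0 ∨ d ρ = 0) (α : Bool) :
    bdp α x = if α then c else d := by
  ext ρ
  have : 0 ≤ c ρ := hc ρ
  have : 0 ≤ d ρ := hd ρ
  cases α <;> rcases hcd ρ with h0 | h0 <;>
    simp [bdp, posPart, negPart, *]

def MemAtom (σ : Cell n) (α : Bool) (ρ : Cell n) : Prop :=
  ρ.IsFace σ ∧ ∀ j, σ j = none → ρ j ≠ none → ρ j = some (twist α (ρ.below j))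

instance (σ : Cell n) (α : Bool) (ρ : Cell n) : Decidable (MemAtom σ α ρ) := by
  unfold MemAtom; infer_instance

noncomputable def atomChain (σ : Cell n) (α : Bool) (q : ℕ) : Chain n :=
  Finsupp.equivFunOnFinite.symm fun ρ => if ρ.dim = q ∧ MemAtom σ α ρ then 1 else 0

theorem atomChain_apply (σ : Cell n) (α : Bool) (q : ℕ) (ρ : Cell n) :
    atomChain σ α q ρ = if ρ.dim = q ∧ MemAtom σ α ρ then 1 else 0 := rfl

theorem memAtom_self (σ : Cell n) (α : Bool) : MemAtom σ α σ :=
  ⟨Cell.IsFace.refl σ, fun _ hσ hσ' => absurd hσ hσ'⟩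

theorem atomChain_dim (σ : Cell n) (α : Bool) : atomChain σ α σ.dim = Finsupp.single σ 1 := by
  ext ρ
  rw [atomChain_apply, Finsupp.single_apply]
  by_cases hρ : σ = ρ
  · simp [← hρ, memAtom_self]
  · rw [if_neg hρ, if_neg]
    rintro ⟨hdim, hmem, -⟩
    exact (hmem.dim_lt_of_ne (Ne.symm hρ)).ne hdim

theorem atomChain_eq_zero_of_dim_lt {σ : Cell n} {q : ℕ} (h : σ.dim < q) (α : Bool) :
    atomChain σ α q = 0 := by
  ext ρ
  rw [atomChain_apply, if_neg]
  · rfl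
  rintro ⟨rfl, hmem, -⟩
  exact h.not_ge hmem.dim_le

theorem memAtom_update_none_iff {σ ρ : Cell n} {α : Bool} {i : Fin n} (hi : ρ i ≠ none) :
    MemAtom σ α (Function.update ρ i none) ↔ σ i = none ∧ ρ.IsFace σ ∧
      (∀ j, σ j = none → ρ j ≠ none → j < i → ρ j = some (twist α (ρ.below j))) ∧
      (∀ j, σ j = none → ρ j ≠ none → i < j → ρ j ≠ some (twist α (ρ.below j))) := by
  rw [MemAtom, Cell.isFace_update_none_iff, and_assoc]
  refine and_congr_right fun _ => and_congr_right fun _ => ?_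
  constructor
  · intro h
    refine ⟨fun j hσ hρ hji => ?_, fun j hσ hρ hij => ?_⟩
    · simpa [hji.ne, Cell.below_update_of_le ρ none hji.le] using h j hσ (by simpa [hji.ne])
    · have := h j hσ (by simpa [hij.ne'])
      rw [Function.update_of_ne hij.ne', Cell.below_update_none_of_lt hi hij, twist_succ] at this
      exact (eq_some_not_iff hρ _).mp this
  · intro ⟨hlt, hgt⟩ j hσ hρ
    rcases lt_trichotomy j i with hji | rfl | hij
    · rw [Function.update_of_ne hji.ne] at hρ ⊢
      rw [Cell.below_update_of_le ρ none hji.le]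
      exact hlt j hσ hρ hji
    · simp at hρ
    · rw [Function.update_of_ne hij.ne'] at hρ ⊢
      rw [Cell.below_update_none_of_lt hi hij, twist_succ]
      exact (eq_some_not_iff hρ _).mpr (hgt j hσ hρ hij)

theorem bd_atomChain (σ : Cell n) (α : Bool) (q : ℕ) :
    bd (atomChain σ α (q + 1)) = atomChain σ true q - atomChain σ false q := by
  classical
  ext ρ
  set J := univ.filter fun j => σ j = none ∧ ρ j ≠ none
  set γ : Bool → Fin n → Prop := fun β j => ρ j = some (twist β (ρ.below j))
  have hmem : ∀ β, MemAtom σ β ρ ↔ ρ.IsFace σ ∧ ∀ j ∈ J, γ β j := by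
    simp [MemAtom, J, γ]
  have hterm : ∀ i, bdCoeff ρ i * atomChain σ α (q + 1) (Function.update ρ i none) =
      if i ∈ J then
        (if (ρ.dim = q ∧ ρ.IsFace σ) ∧ (∀ j ∈ J, j < i → γ α j) ∧ (∀ j ∈ J, i < j → ¬γ α j)
          then sgn α * if γ α i then 1 else -1 else 0)
      else 0 := by
    intro i
    by_cases hi : ρ i = none
    · simp [bdCoeff, hi, J]
    · obtain ⟨ε, hρ⟩ := Option.ne_none_iff_exists'.mp hi
      simp only [atomChain_apply, Cell.dim_update_none hi, memAtom_update_none_iff hi, bdCoeff, hρ,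
        sgn_mul_neg_one_pow ε α]
      by_cases hσ : σ i = none <;> simp [J, γ, hσ, hρ, and_assoc]
  have hnot : ∀ j ∈ J, (γ false j ↔ ¬γ true j) := fun j hj => by
    change ρ j = some (twist (!true) _) ↔ _
    rw [twist_not]
    exact eq_some_not_iff (mem_filter.mp hj).2.2 _
  rw [bd_apply, sum_congr rfl fun i _ => hterm i, sum_ite_mem, univ_inter, Finsupp.sub_apply,
    atomChain_apply, atomChain_apply]
  simp only [hmem]
  by_cases hP : ρ.dim = q ∧ ρ.IsFace σ
  · simp only [hP, true_and, ← mul_ite_zero, ← mul_sum]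
    trans sgn α * ((if ∀ j ∈ J, γ α j then 1 else 0) - if ∀ j ∈ J, ¬γ α j then 1 else 0)
    · congr 1
      convert sum_ite_switch J (γ α)
    have hfalse : (∀ j ∈ J, γ false j) ↔ ∀ j ∈ J, ¬γ true j := forall₂_congr hnot
    have hfalse' : (∀ j ∈ J, ¬γ false j) ↔ ∀ j ∈ J, γ true j :=
      forall₂_congr fun j hj => by rw [hnot j hj, not_not]
    cases α <;> simp [sgn, hfalse, hfalse']
  · simp only [← and_assoc, hP, false_and, if_false, sum_const_zero, sub_zero]

theorem not_memAtom_true_and_false {σ ρ : Cell n} (h : ρ.dim < σ.dim) :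
    ¬(MemAtom σ true ρ ∧ MemAtom σ false ρ) := by
  rintro ⟨⟨hface, htrue⟩, -, hfalse⟩
  obtain ⟨j, hj⟩ := Function.ne_iff.mp (ne_of_apply_ne Cell.dim h.ne)
  have hσ : σ j = none := by_contra fun hσ => hj (hface j hσ)
  have hρ : ρ j ≠ none := fun hρ => hj (hρ.trans hσ.symm)
  have := (htrue j hσ hρ).symm.trans (hfalse j hσ hρ)
  rw [Option.some_inj, ← Bool.not_true, twist_not] at this
  exact Bool.not_ne_self _ this.symm

theorem bdp_atomChain {σ : Cell n} {q : ℕ} (hq : q < σ.dim) (α : Bool) :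
    bdp α (atomChain σ α (q + 1)) = atomChain σ α q := by
  rw [bdp_eq_of_bd_eq_sub (bd_atomChain σ α q)]
  · cases α <;> rfl
  all_goals intro ρ
  · simp only [atomChain_apply]; split_ifs <;> simp
  · simp only [atomChain_apply]; split_ifs <;> simp
  · simp only [atomChain_apply]
    by_cases hd : ρ.dim = q
    · have := not_memAtom_true_and_false (σ := σ) (ρ := ρ) (hd ▸ hq)
      by_cases ht : MemAtom σ true ρ <;> simp_all
    · simp [hd]

theorem atom_dim (σ : Cell n) (α : Bool) : atom σ α σ.dim = Finsupp.single σ 1 := by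
  simp [atom]

theorem atom_eq_zero_of_dim_lt {σ : Cell n} {q : ℕ} (h : σ.dim < q) (α : Bool) :
    atom σ α q = 0 := by
  simp [atom, h.not_ge]

theorem atom_eq_bdp_atom_succ {σ : Cell n} {q : ℕ} (hq : q < σ.dim) (α : Bool) :
    atom σ α q = bdp α (atom σ α (q + 1)) := by
  rw [atom, atom, if_pos hq.le, if_pos (Nat.succ_le_of_lt hq),
    ← Function.iterate_succ_apply' (bdp α)]
  congr 2
  omega

theorem atom_eq_atomChain (σ : Cell n) (α : Bool) (q : ℕ) : atom σ α q = atomChain σ α q := by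
  rcases lt_or_ge σ.dim q with hq | hq
  · rw [atom_eq_zero_of_dim_lt hq, atomChain_eq_zero_of_dim_lt hq]
  induction h : σ.dim - q generalizing q with
  | zero =>
    obtain rfl : q = σ.dim := by omega
    rw [atom_dim, atomChain_dim]
  | succ k ih =>
    rw [atom_eq_bdp_atom_succ (by omega), ih (q + 1) (by omega) (by omega),
      bdp_atomChain (by omega)]

theorem cellOf_inj {v w : Option Bool} : cellOf v = cellOf w ↔ v = w :=
  ⟨fun h => congrFun h 0, congrArg cellOf⟩

theorem dim_cellOf_none : (cellOf none).dim = 1 := rfl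

theorem dim_cellOf_some (γ : Bool) : (cellOf (some γ)).dim = 0 := rfl

theorem bdCell_cellOf_none :
    bdCell (cellOf none) = Finsupp.single (cellOf (some true)) 1 -
      Finsupp.single (cellOf (some false)) 1 := by
  have hupd : ∀ v, Function.update (cellOf none) 0 v = cellOf v := fun v => by
    funext j; rw [Fin.fin_one_eq_zero j]; simp [cellOf]
  simp [bdCell, hupd, Cell.below, cellOf]

theorem atom_cellOf_none_zero (α : Bool) :
    atom (cellOf none) α 0 = Finsupp.single (cellOf (some α)) 1 := by
  have hbd : bd (Finsupp.single (cellOf none) 1) = Finsupp.single (cellOf (some true)) 1 -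
      Finsupp.single (cellOf (some false)) 1 := by
    rw [bd, Finsupp.sum_single_index (by simp), one_smul, bdCell_cellOf_none]
  have hdisj : ∀ ρ, Finsupp.single (cellOf (some true)) (1 : ℤ) ρ = 0 ∨
      Finsupp.single (cellOf (some false)) (1 : ℤ) ρ = 0 := fun ρ => by
    simp only [Finsupp.single_apply]
    split_ifs with h1 h2
    · simp [← h2, cellOf_inj] at h1
    all_goals simp
  rw [atom, if_pos (Nat.zero_le _), Nat.sub_zero, dim_cellOf_none,
    Function.iterate_one, bdp_eq_of_bd_eq_sub hbd (by simp) (by simp) hdisj]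
  cases α <;> rfl

theorem atom_cellOf_apply (w v : Option Bool) (β : Bool) (i : ℕ) :
    atom (cellOf w) β i (cellOf v) =
      if i = (if v = none then 1 else 0) ∧ (v = w ∨ w = none ∧ v = some β) then 1 else 0 := by
  rcases w with _ | γ
  · rcases i with _ | _ | i
    · simp only [atom_cellOf_none_zero, Finsupp.single_apply, cellOf_inj]
      rcases v with _ | _ | _ <;> cases β <;> simp
    · rw [show 0 + 1 = (cellOf none).dim from rfl, atom_dim]
      simp only [Finsupp.single_apply, cellOf_inj]
      rcases v with _ | _ | _ <;> simp [dim_cellOf_none]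
    · rw [atom_eq_zero_of_dim_lt (by rw [dim_cellOf_none]; omega)]
      rcases v with _ | _ | _ <;> simp
  · rcases i with _ | i
    · rw [← dim_cellOf_some γ, atom_dim]
      simp only [Finsupp.single_apply, cellOf_inj]
      rcases v with _ | _ | _ <;> cases γ <;> simp
    · rw [atom_eq_zero_of_dim_lt (by rw [dim_cellOf_some]; omega)]
      rcases v with _ | _ | _ <;> simp

theorem memAtom_iff_forall {σ ρ : Cell n} {α : Bool} :
    MemAtom σ α ρ ↔ ∀ j, ρ j = σ j ∨ σ j = none ∧ ρ j = some (twist α (ρ.below j)) := by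
  rw [MemAtom, Cell.IsFace, ← forall_and]
  refine forall_congr' fun j => ?_
  generalize ρ j = x, σ j = y
  rcases x with _ | _ | _ <;> rcases y with _ | _ | _ <;> simp

theorem tens_apply (c : Fin n → Chain 1) (ρ : Cell n) : tens c ρ = ∏ j, c j (cellOf (ρ j)) := rfl

theorem sum_tens_atom_eq_atomChain (σ : Cell n) (α : Bool) (q : ℕ) :
    ∑ ι ∈ Finset.Nat.antidiagonalTuple n q,
      tens (fun j => atom (cellOf (σ j)) (twist α (∑ t ∈ univ.filter (· < j), ι t)) (ι j)) =
      atomChain σ α q := by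
  ext ρ
  set ι₀ : Fin n → ℕ := fun j => if ρ j = none then 1 else 0
  have hsum : ∀ j, ∑ t ∈ univ.filter (· < j), ι₀ t = ρ.below j :=
    fun j => (Cell.below_eq_sum ρ j).symm
  have hterm : ∀ ι : Fin n → ℕ,
      tens (fun j => atom (cellOf (σ j)) (twist α (∑ t ∈ univ.filter (· < j), ι t)) (ι j)) ρ =
        if ι = ι₀ ∧ MemAtom σ α ρ then 1 else 0 := by
    intro ι
    simp only [tens_apply, atom_cellOf_apply, prod_boole, mem_univ, true_implies]
    congr 1
    apply propext
    constructor
    · intro h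
      obtain rfl : ι = ι₀ := funext fun j => (h j).1
      exact ⟨rfl, memAtom_iff_forall.2 fun j => hsum j ▸ (h j).2⟩
    · rintro ⟨rfl, hmem⟩ j
      exact ⟨rfl, (hsum j).symm ▸ memAtom_iff_forall.1 hmem j⟩
  rw [Finset.sum_apply', sum_congr rfl fun ι _ => hterm ι, atomChain_apply]
  by_cases hM : MemAtom σ α ρ
  · simp only [hM, and_true, sum_ite_eq', Nat.mem_antidiagonalTuple, Cell.dim_eq_sum ρ]
    rfl
  · simp [hM]

end

/-- the atoms in `I¹` are given by `⟨u₁⟩_0^α = ∂^α u₁`, `⟨u₁⟩_1^α = u₁`,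
`⟨u₁⟩_q^α = 0` for `q > 1`, `⟨∂^β u₁⟩_0^α = ∂^β u₁` and `⟨∂^β u₁⟩_q^α = 0` for `q > 0`;
and the atoms in `Iⁿ` are given by the tensor formula
`⟨σ₁⊗⋯⊗σₙ⟩_q^α = Σ_{i(1)+⋯+i(n)=q} ⟨σ₁⟩_{i(1)}^α ⊗ ⟨σ₂⟩_{i(2)}^{(−1)^{i(1)}α} ⊗ ⋯`. -/
theorem atoms_in_interval_and_tensor_formula :
    (∀ α : Bool, atom (un 1) α 0 = Finsupp.single (cellOf (some α)) 1) ∧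
    (∀ α : Bool, atom (un 1) α 1 = Finsupp.single (un 1) 1) ∧
    (∀ (α : Bool) (q : ℕ), 1 < q → atom (un 1) α q = 0) ∧
    (∀ α β : Bool, atom (cellOf (some β)) α 0 = Finsupp.single (cellOf (some β)) 1) ∧
    (∀ (α β : Bool) (q : ℕ), 0 < q → atom (cellOf (some β)) α q = 0) ∧
    (∀ (n : ℕ) (σ : Cell n) (α : Bool) (q : ℕ),
      atom σ α q =
        ∑ ι ∈ Finset.Nat.antidiagonalTuple n q,
          tens fun j =>
            atom (cellOf (σ j))
              (twist α (∑ t ∈ Finset.univ.filter (fun t => t < j), ι t)) (ι j)) :=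
  ⟨atom_cellOf_none_zero, fun α => atom_dim (un 1) α, fun α _ hq => atom_eq_zero_of_dim_lt hq α,
    fun α β => atom_dim (cellOf (some β)) α, fun α _ _ hq => atom_eq_zero_of_dim_lt hq α,
    fun _ σ α q => by rw [atom_eq_atomChain, sum_tens_atom_eq_atomChain]⟩

end CubicalNerve
end

section
/- In νI^n: (i) for x ∈ νI^n and p < q one has d_p^α d_q^β x = d_q^β d_p^α x = d_p^α x; (ii) if x, y ∈ νI^n satisfy d_p⁺x = d_p⁻y, then the termwise combination x #_p y = x − d_p⁺x + y again lies in νI^n; (iii) if x #_q y is defined and p ≠ q, then d_p^α(x #_q y) = d_p^α x #_q d_p^α y. -/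
namespace CubicalNerve

lemma bd_add' {n : ℕ} (c d : Chain n) : bd (c + d) = bd c + bd d := by
  unfold bd
  exact Finsupp.sum_add_index' (fun σ => zero_smul ℤ _) (fun σ a b => add_smul a b _)

/-- in `ν Iⁿ`: (i) for `x ∈ ν Iⁿ` and `p < q`,
`d_p^α d_q^β x = d_q^β d_p^α x = d_p^α x`; (ii) if `x, y ∈ ν Iⁿ` satisfy
`d_p⁺ x = d_p⁻ y` then the termwise combination `x #_p y = x − d_p⁺ x + y` again lies
in `ν Iⁿ`; (iii) if `x #_q y` is defined and `p ≠ q`, then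
`d_p^α (x #_q y) = d_p^α x #_q d_p^α y`. -/
theorem nu_identities_and_compositions (n : ℕ) :
    (∀ (x : ℕ → Bool → Chain n), IsNu x → ∀ (p q : ℕ) (α β : Bool), p < q →
      dOp p α (dOp q β x) = dOp q β (dOp p α x) ∧ dOp q β (dOp p α x) = dOp p α x) ∧
    (∀ (p : ℕ) (x y : ℕ → Bool → Chain n), IsNu x → IsNu y →
      dOp p true x = dOp p false y → IsNu (comp p x y)) ∧
    (∀ (p q : ℕ) (α : Bool) (x y : ℕ → Bool → Chain n), IsNu x → IsNu y →
      dOp q true x = dOp q false y → p ≠ q →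
      dOp p α (comp q x y) = comp q (dOp p α x) (dOp p α y)) := by
  refine ⟨?_, ?_, ?_⟩
  · intro x _ p q α β hpq
    constructor
    · funext i β'
      simp only [dOp]
      split_ifs <;> first | rfl | omega
    · funext i β'
      simp only [dOp]
      split_ifs <;> first | rfl | omega
  · intro p x y hx hy hxy
    obtain ⟨hxs, hxn, hxa, hxb⟩ := hx
    obtain ⟨hys, hyn, hya, hyb⟩ := hy
    have hlt : ∀ i, i < p → ∀ β, x i β = y i β := by
      intro i hi β
      have := congrFun (congrFun hxy i) β
      simpa [dOp, hi] using this
    have hp : x p true = y p false := by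
      have := congrFun (congrFun hxy p) true
      simpa [dOp] using this
    have hzlt : ∀ i, i < p → ∀ β, comp p x y i β = y i β := by
      intro i hi β
      simp [comp, dOp, hi, hlt i hi β]
    have hzt : comp p x y p true = y p true := by
      simp [comp, dOp]
    have hzf : comp p x y p false = x p false := by
      simp only [comp, dOp, lt_irrefl, if_false, if_pos rfl, if_neg (lt_irrefl p)]
      rw [hp]; simp
    have hzgt : ∀ i, p < i → ∀ β, comp p x y i β = x i β + y i β := by
      intro i hi β
      simp [comp, dOp, Nat.lt_asymm hi, (Nat.ne_of_gt hi)]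
    refine ⟨?_, ?_, ?_, ?_⟩
    · intro i α σ hσ
      rcases lt_trichotomy i p with h | h | h
      · rw [hzlt i h α] at hσ; exact hys i α σ hσ
      · subst h
        cases α
        · rw [hzf] at hσ; exact hxs i false σ hσ
        · rw [hzt] at hσ; exact hys i true σ hσ
      · rw [hzgt i h α] at hσ
        rcases Finset.mem_union.mp (Finsupp.support_add hσ) with h' | h'
        · exact hxs i α σ h'
        · exact hys i α σ h'
    · intro i α
      rcases lt_trichotomy i p with h | h | h
      · rw [hzlt i h α]; exact hyn i α
      · subst h
        cases α
        · rw [hzf]; exact hxn i false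
        · rw [hzt]; exact hyn i true
      · rw [hzgt i h α]; exact add_nonneg (hxn i α) (hyn i α)
    · intro α
      rcases Nat.eq_zero_or_pos p with h | h
      · subst h
        cases α
        · rw [hzf]; exact hxa false
        · rw [hzt]; exact hya true
      · rw [hzlt 0 h α]; exact hya α
    · intro i α
      rcases lt_trichotomy (i + 1) p with h | h | h
      · rw [hzlt i (by omega) true, hzlt i (by omega) false, hzlt (i + 1) h α]
        exact hyb i α
      · have hi : i < p := by omega
        rw [hzlt i hi true, hzlt i hi false]
        cases α
        · have hc : comp p x y (i + 1) false = x (i + 1) false := by rw [h]; exact hzf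
          rw [hc, ← hlt i hi true, ← hlt i hi false]
          exact hxb i false
        · have hc : comp p x y (i + 1) true = y (i + 1) true := by rw [h]; exact hzt
          rw [hc]
          exact hyb i true
      · rcases eq_or_lt_of_le (Nat.le_of_lt_succ h) with h' | h'
        · subst h'
          rw [hzt, hzf, hzgt (p + 1) (Nat.lt_succ_self p) α, bd_add', ← hxb p α, ← hyb p α, hp]
          abel
        · rw [hzgt i h' true, hzgt i h' false, hzgt (i + 1) (by omega) α, bd_add',
            ← hxb i α, ← hyb i α]
          abel
  · intro p q α x y _ _ _ hpq
    funext i β'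
    simp only [dOp, comp]
    split_ifs <;> first | rfl | omega | abel

end CubicalNerve
end
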